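/- The map sending a pair (a, b) of unit quaternions to the ℝ-linear map q ↦ a * q * b̄ is a group homomorphism from S³ × S³ (unit quaternions under multiplication) to the orthogonal group O(4) of ℍ, whose kernel is {(1,1), (-1,-1)}. -/

import Mathlib

/-!
Both factors have norm one, so `q ↦ a q b̄` is an isometry with inverse `q ↦ ā q b`, and
`a a' q (b b')‾ = a (a' q b̄') b̄` makes the assignment multiplicative. If `a q b̄ = q` for all `q`,
then `q = 1` gives `b = a`, so `a` commutes with every quaternion; the centre of `ℍ` is `ℝ`,
whose unit elements are `±1`.
-/

open Metric

namespace Quaternion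

theorem star_mul_self_of_norm_eq_one {a : ℍ[ℝ]} (ha : ‖a‖ = 1) : star a * a = 1 := by
  rw [star_mul_self, normSq_eq_norm_mul_self, ha, mul_one, coe_one]

theorem self_mul_star_of_norm_eq_one {a : ℍ[ℝ]} (ha : ‖a‖ = 1) : a * star a = 1 := by
  rw [self_mul_star, normSq_eq_norm_mul_self, ha, mul_one, coe_one]

theorem im_eq_zero_of_forall_mul_comm {a : ℍ[ℝ]} (h : ∀ q : ℍ[ℝ], a * q = q * a) :
    a.im = 0 := by
  -- `i` and `j` are introduced abstractly because a literal `⟨0, 1, 0, 0⟩` is a bare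
  -- `QuaternionAlgebra` term, which the `ℍ[ℝ]` multiplication lemmas do not match.
  obtain ⟨i, hi⟩ : ∃ i : ℍ[ℝ], i.re = 0 ∧ i.imI = 1 ∧ i.imJ = 0 ∧ i.imK = 0 :=
    ⟨⟨0, 1, 0, 0⟩, rfl, rfl, rfl, rfl⟩
  obtain ⟨j, hj⟩ : ∃ j : ℍ[ℝ], j.re = 0 ∧ j.imI = 0 ∧ j.imJ = 1 ∧ j.imK = 0 :=
    ⟨⟨0, 0, 1, 0⟩, rfl, rfl, rfl, rfl⟩
  have hai := Quaternion.ext_iff.mp (h i)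
  have haj := Quaternion.ext_iff.mp (h j)
  simp only [re_mul, imI_mul, imJ_mul, imK_mul, hi, hj] at hai haj
  ext <;> simp <;> linarith

theorem eq_one_or_eq_neg_one_of_forall_mul_comm {a : ℍ[ℝ]} (ha : ‖a‖ = 1)
    (h : ∀ q : ℍ[ℝ], a * q = q * a) : a = 1 ∨ a = -1 := by
  have ha_re : a = (a.re : ℍ[ℝ]) := by
    rw [← re_add_im a, im_eq_zero_of_forall_mul_comm h, add_zero, re_coe]
  rw [ha_re, norm_coe, Real.norm_eq_abs] at ha
  rw [ha_re]
  rcases abs_eq zero_le_one |>.mp ha with hre | hre <;> simp [hre]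

noncomputable def sandwich (a b : sphere (0 : ℍ[ℝ]) 1) : ℍ[ℝ] ≃ₗᵢ[ℝ] ℍ[ℝ] where
  toFun q := a * q * star (b : ℍ[ℝ])
  invFun q := star (a : ℍ[ℝ]) * q * b
  map_add' x y := by noncomm_ring
  map_smul' r x := by simp
  left_inv x := by
    simp only [← mul_assoc, star_mul_self_of_norm_eq_one (norm_eq_of_mem_sphere a), one_mul]
    simp [mul_assoc, star_mul_self_of_norm_eq_one (norm_eq_of_mem_sphere b)]
  right_inv x := by
    simp only [← mul_assoc, self_mul_star_of_norm_eq_one (norm_eq_of_mem_sphere a), one_mul]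
    simp [mul_assoc, self_mul_star_of_norm_eq_one (norm_eq_of_mem_sphere b)]
  norm_map' x := by simp [norm_mul]

theorem sandwich_apply (a b : sphere (0 : ℍ[ℝ]) 1) (q : ℍ[ℝ]) :
    sandwich a b q = a * q * star (b : ℍ[ℝ]) :=
  rfl

noncomputable def sandwichHom :
    (sphere (0 : ℍ[ℝ]) 1 × sphere (0 : ℍ[ℝ]) 1) →* (ℍ[ℝ] ≃ₗᵢ[ℝ] ℍ[ℝ]) where
  toFun p := sandwich p.1 p.2
  map_one' := LinearIsometryEquiv.ext fun q => by simp [sandwich_apply]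
  map_mul' p p' := LinearIsometryEquiv.ext fun q => by
    simp [sandwich_apply, star_mul, mul_assoc]

theorem sandwichHom_eq_one_iff (a b : sphere (0 : ℍ[ℝ]) 1) :
    sandwichHom (a, b) = 1 ↔
      ((a : ℍ[ℝ]) = 1 ∧ (b : ℍ[ℝ]) = 1) ∨ ((a : ℍ[ℝ]) = -1 ∧ (b : ℍ[ℝ]) = -1) := by
  have ha := norm_eq_of_mem_sphere a
  refine ⟨fun h => ?_, ?_⟩
  · have hfix (q : ℍ[ℝ]) : a * q * star (b : ℍ[ℝ]) = q := LinearIsometryEquiv.ext_iff.mp h q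
    have hab : (a : ℍ[ℝ]) * star (b : ℍ[ℝ]) = 1 := by simpa using hfix 1
    have hba : (b : ℍ[ℝ]) = a := by
      refine star_injective ?_
      calc star (b : ℍ[ℝ]) = star (a : ℍ[ℝ]) * (a * star (b : ℍ[ℝ])) := by
            rw [← mul_assoc, star_mul_self_of_norm_eq_one ha, one_mul]
        _ = star (a : ℍ[ℝ]) := by rw [hab, mul_one]
    have hcomm (q : ℍ[ℝ]) : a * q = q * a := by
      calc (a : ℍ[ℝ]) * q = a * q * star (a : ℍ[ℝ]) * a := by
            rw [mul_assoc _ (star _), star_mul_self_of_norm_eq_one ha, mul_one]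
        _ = a * q * star (b : ℍ[ℝ]) * a := by rw [hba]
        _ = q * a := by rw [hfix]
    rw [hba, and_self, and_self]
    exact eq_one_or_eq_neg_one_of_forall_mul_comm ha hcomm
  · rintro (⟨ha, hb⟩ | ⟨ha, hb⟩) <;>
      exact LinearIsometryEquiv.ext fun q => by simp [sandwichHom, sandwich_apply, ha, hb]

end Quaternion

/-- The map `(a,b) ↦ (q ↦ a * q * b̄)` is a group homomorphism from S³ × S³ to the group of
linear isometries of ℍ, with kernel `{(1,1), (-1,-1)}`. -/
theorem clifford_homomorphism :
    ∃ φ : (Metric.sphere (0 : Quaternion ℝ) 1 × Metric.sphere (0 : Quaternion ℝ) 1) →*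
        (Quaternion ℝ ≃ₗᵢ[ℝ] Quaternion ℝ),
      (∀ (a b : Metric.sphere (0 : Quaternion ℝ) 1) (q : Quaternion ℝ),
          φ (a, b) q = (a : Quaternion ℝ) * q * star (b : Quaternion ℝ)) ∧
      (∀ (a b : Metric.sphere (0 : Quaternion ℝ) 1),
          φ (a, b) = 1 ↔
            ((a : Quaternion ℝ) = 1 ∧ (b : Quaternion ℝ) = 1) ∨
            ((a : Quaternion ℝ) = -1 ∧ (b : Quaternion ℝ) = -1)) :=
  ⟨Quaternion.sandwichHom, fun _ _ _ => rfl, Quaternion.sandwichHom_eq_one_iff⟩
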